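/- Suppose a : ℤ² → ℂ satisfies: (i) the F-equation q^{n-2}[(s₁-n+1)/2]_q a(n-2,m) + q^{n+m-2}[(s₂-m+1)/2]_q a(n,m-2) + [(s₃+n+m-1)/2]_q a(n,m) = 0 for all (n,m) with n+m ≥ N+2, and (ii) the diagonal equation (2.4.5) on the line n+m = N. If moreover [(s₃+k+1)/2]_q ≠ 0 for all relevant k, then a also satisfies the E-equation [(s₁+n+1)/2]_q a(n+2,m) + q^n [(s₂+m+1)/2]_q a(n,m+2) + q^{n+m}[(s₃-n-m-1)/2]_q a(n,m) = 0 for all (n,m) with n+m = N. -/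

import Mathlib

noncomputable def qpow (lq x : ℂ) : ℂ := Complex.exp (x * lq)

/-- [x]_q = (q^x - q^{-x})/(q - q⁻¹). -/
noncomputable def qnum (q lq x : ℂ) : ℂ := (qpow lq x - qpow lq (-x)) / (q - q⁻¹)

/-!
Multiply the E-residual at `(n, m)` on the line `n + m = N` by `[(s₃ + N + 1)/2]_q`: it becomes
`[(s₁+n+1)/2]_q F(n+2, m) + q^n [(s₂+m+1)/2]_q F(n, m+2) + q^N D(n, m)`, with `F` the F-residual and
`D` the diagonal residual. All terms cancel literally except those in `a n m`. For these, the
product formula `[(s-k)/2]_q [(s+k)/2]_q = (q^s + q^{-s} - q^k - q^{-k}) / (q - q⁻¹)²` shows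
that each difference `[(s-k-1)/2]_q [(s+k+1)/2]_q - [(s-k+1)/2]_q [(s+k-1)/2]_q` is independent
of `s`, and the three remaining terms cancel because `k ↦ q^{2k} - 1` is a cocycle.
The F-residuals vanish since `n + m + 2 ≥ N + 2`, so the E-residual vanishes by the
nonvanishing of `[(s₃ + N + 1)/2]_q`.
-/

noncomputable def fResidual (q lq s₁ s₂ s₃ : ℂ) (a : ℤ → ℤ → ℂ) (n m : ℤ) : ℂ :=
  qpow lq ((n : ℂ) - 2) * qnum q lq ((s₁ - (n : ℂ) + 1) / 2) * a (n - 2) m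
    + qpow lq ((n : ℂ) + (m : ℂ) - 2) * qnum q lq ((s₂ - (m : ℂ) + 1) / 2) * a n (m - 2)
    + qnum q lq ((s₃ + (n : ℂ) + (m : ℂ) - 1) / 2) * a n m

noncomputable def eResidual (q lq s₁ s₂ s₃ : ℂ) (a : ℤ → ℤ → ℂ) (n m : ℤ) : ℂ :=
  qnum q lq ((s₁ + (n : ℂ) + 1) / 2) * a (n + 2) m
    + qpow lq (n : ℂ) * qnum q lq ((s₂ + (m : ℂ) + 1) / 2) * a n (m + 2)
    + qpow lq ((n : ℂ) + (m : ℂ)) * qnum q lq ((s₃ - (n : ℂ) - (m : ℂ) - 1) / 2) * a n m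

noncomputable def diagResidual (q lq s₁ s₂ s₃ : ℂ) (a : ℤ → ℤ → ℂ) (n m : ℤ) : ℂ :=
  (qnum q lq ((s₃ - (n : ℂ) - (m : ℂ) + 1) / 2) * qnum q lq ((s₃ + (n : ℂ) + (m : ℂ) - 1) / 2)
      - qpow lq (-(m : ℂ)) * qnum q lq ((s₁ + (n : ℂ) - 1) / 2) * qnum q lq ((s₁ - (n : ℂ) + 1) / 2)
      - qpow lq (n : ℂ) * qnum q lq ((s₂ - (m : ℂ) + 1) / 2) * qnum q lq ((s₂ + (m : ℂ) - 1) / 2))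
      * a n m
    - (qpow lq ((n : ℂ) - (m : ℂ) - 2) * qnum q lq ((s₁ - (n : ℂ) + 1) / 2)
        * qnum q lq ((s₂ + (m : ℂ) + 1) / 2) * a (n - 2) (m + 2)
      + qnum q lq ((s₂ - (m : ℂ) + 1) / 2) * qnum q lq ((s₁ + (n : ℂ) + 1) / 2)
        * a (n + 2) (m - 2))

section

variable (q lq : ℂ)

theorem qpow_add (x y : ℂ) : qpow lq (x + y) = qpow lq x * qpow lq y := by
  simp only [qpow, add_mul, Complex.exp_add]

theorem qpow_neg (x : ℂ) : qpow lq (-x) = (qpow lq x)⁻¹ := by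
  simp only [qpow, neg_mul, Complex.exp_neg]

theorem qpow_ne_zero (x : ℂ) : qpow lq x ≠ 0 := Complex.exp_ne_zero _

theorem qnum_mul_qnum (s k : ℂ) :
    qnum q lq ((s - k) / 2) * qnum q lq ((s + k) / 2)
      = (qpow lq s + qpow lq (-s) - qpow lq k - qpow lq (-k)) / (q - q⁻¹) ^ 2 := by
  obtain ⟨x, y, rfl, rfl⟩ : ∃ x y : ℂ, s = x + y ∧ k = y - x :=
    ⟨(s - k) / 2, (s + k) / 2, by ring, by ring⟩
  rw [show (x + y - (y - x)) / 2 = x by ring, show (x + y + (y - x)) / 2 = y by ring]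
  simp only [qnum, sub_eq_add_neg, neg_add, neg_neg, qpow_add, qpow_neg]
  field_simp [qpow_ne_zero]
  ring

theorem qnum_mul_qnum_sub_qnum_mul_qnum (s k : ℂ) :
    qnum q lq ((s - (k + 1)) / 2) * qnum q lq ((s + (k + 1)) / 2)
        - qnum q lq ((s - (k - 1)) / 2) * qnum q lq ((s + (k - 1)) / 2)
      = -((qpow lq 1 - qpow lq (-1)) * (qpow lq k - qpow lq (-k))) / (q - q⁻¹) ^ 2 := by
  rw [qnum_mul_qnum, qnum_mul_qnum]
  simp only [sub_eq_add_neg, neg_add, neg_neg, qpow_add, qpow_neg]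
  field_simp [qpow_ne_zero]
  ring

-- `g k = qpow k * (qpow k - qpow (-k)) = qpow (2 * k) - 1` satisfies
-- `g (x + y) = g x + qpow (2 * x) * g y`.
theorem qpow_mul_sub_qpow_add (x y : ℂ) :
    qpow lq (x + y) * (qpow lq (x + y) - qpow lq (-(x + y)))
      = qpow lq x * (qpow lq x - qpow lq (-x))
        + qpow lq x * qpow lq (x + y) * (qpow lq y - qpow lq (-y)) := by
  simp only [qpow_add, qpow_neg]
  field_simp [qpow_ne_zero]
  ring

-- The coefficients of `a n m` in `qnum_mul_eResidual`.
theorem qnum_mul_eResidual_center_coeff (s₁ s₂ s₃ x y : ℂ) :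
    qpow lq (x + y) * qnum q lq ((s₃ - x - y - 1) / 2) * qnum q lq ((s₃ + x + y + 1) / 2)
      = qpow lq x * qnum q lq ((s₁ - x - 1) / 2) * qnum q lq ((s₁ + x + 1) / 2)
        + qpow lq x * qpow lq (x + y) * qnum q lq ((s₂ - y - 1) / 2) * qnum q lq ((s₂ + y + 1) / 2)
        + qpow lq (x + y) * (qnum q lq ((s₃ - x - y + 1) / 2) * qnum q lq ((s₃ + x + y - 1) / 2)
          - qpow lq (-y) * qnum q lq ((s₁ + x - 1) / 2) * qnum q lq ((s₁ - x + 1) / 2)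
          - qpow lq x * qnum q lq ((s₂ - y + 1) / 2) * qnum q lq ((s₂ + y - 1) / 2)) := by
  have h₁ := qnum_mul_qnum_sub_qnum_mul_qnum q lq s₁ x
  have h₂ := qnum_mul_qnum_sub_qnum_mul_qnum q lq s₂ y
  have h₃ := qnum_mul_qnum_sub_qnum_mul_qnum q lq s₃ (x + y)
  have hpow : qpow lq (x + y) * qpow lq (-y) = qpow lq x := by
    rw [← qpow_add]; congr 1; ring
  have hcocycle := qpow_mul_sub_qpow_add lq x y
  linear_combination (norm := ring_nf) qpow lq (x + y) * h₃ - qpow lq x * h₁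
    - qpow lq x * qpow lq (x + y) * h₂
    + qnum q lq ((s₁ + x - 1) / 2) * qnum q lq ((s₁ - x + 1) / 2) * hpow
    - (qpow lq 1 - qpow lq (-1)) / (q - q⁻¹) ^ 2 * hcocycle

theorem qnum_mul_eResidual (s₁ s₂ s₃ : ℂ) (a : ℤ → ℤ → ℂ) (n m : ℤ) :
    qnum q lq ((s₃ + ((n + m : ℤ) : ℂ) + 1) / 2) * eResidual q lq s₁ s₂ s₃ a n m
      = qnum q lq ((s₁ + n + 1) / 2) * fResidual q lq s₁ s₂ s₃ a (n + 2) m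
        + qpow lq n * qnum q lq ((s₂ + m + 1) / 2) * fResidual q lq s₁ s₂ s₃ a n (m + 2)
        + qpow lq (n + m) * diagResidual q lq s₁ s₂ s₃ a n m := by
  have hcoeff := qnum_mul_eResidual_center_coeff q lq s₁ s₂ s₃ n m
  have hpow : qpow lq n * qpow lq (n - 2) = qpow lq (n + m) * qpow lq (n - m - 2) := by
    rw [← qpow_add, ← qpow_add]; congr 1; ring
  simp only [eResidual, fResidual, diagResidual, add_sub_cancel_right]
  push_cast
  linear_combination (norm := ring_nf) a n m * hcoeff
    - qnum q lq ((s₁ - n + 1) / 2) * qnum q lq ((s₂ + m + 1) / 2) * a (n - 2) (m + 2) * hpow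

end

theorem stmt16_general (q lq s₁ s₂ s₃ : ℂ)
    (N : ℤ) (a : ℤ → ℤ → ℂ)
    (hF : ∀ n m : ℤ, n + m ≥ N + 2 →
      qpow lq ((n : ℂ) - 2) * qnum q lq ((s₁ - (n : ℂ) + 1) / 2) * a (n - 2) m
        + qpow lq ((n : ℂ) + (m : ℂ) - 2) * qnum q lq ((s₂ - (m : ℂ) + 1) / 2) * a n (m - 2)
        + qnum q lq ((s₃ + (n : ℂ) + (m : ℂ) - 1) / 2) * a n m = 0)
    (hdiag : ∀ n m : ℤ, n + m = N →
      (qnum q lq ((s₃ - (n : ℂ) - (m : ℂ) + 1) / 2) * qnum q lq ((s₃ + (n : ℂ) + (m : ℂ) - 1) / 2)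
          - qpow lq (-(m : ℂ)) * qnum q lq ((s₁ + (n : ℂ) - 1) / 2) * qnum q lq ((s₁ - (n : ℂ) + 1) / 2)
          - qpow lq (n : ℂ) * qnum q lq ((s₂ - (m : ℂ) + 1) / 2) * qnum q lq ((s₂ + (m : ℂ) - 1) / 2))
          * a n m
        = qpow lq ((n : ℂ) - (m : ℂ) - 2) * qnum q lq ((s₁ - (n : ℂ) + 1) / 2)
            * qnum q lq ((s₂ + (m : ℂ) + 1) / 2) * a (n - 2) (m + 2)
          + qnum q lq ((s₂ - (m : ℂ) + 1) / 2) * qnum q lq ((s₁ + (n : ℂ) + 1) / 2)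
            * a (n + 2) (m - 2))
    (hnz : ∀ k : ℤ, k ≥ N → qnum q lq ((s₃ + (k : ℂ) + 1) / 2) ≠ 0) :
    ∀ n m : ℤ, n + m = N →
      qnum q lq ((s₁ + (n : ℂ) + 1) / 2) * a (n + 2) m
        + qpow lq (n : ℂ) * qnum q lq ((s₂ + (m : ℂ) + 1) / 2) * a n (m + 2)
        + qpow lq ((n : ℂ) + (m : ℂ)) * qnum q lq ((s₃ - (n : ℂ) - (m : ℂ) - 1) / 2) * a n m
        = 0 := by
  intro n m hnm
  have hF₁ : fResidual q lq s₁ s₂ s₃ a (n + 2) m = 0 := hF (n + 2) m (by omega)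
  have hF₂ : fResidual q lq s₁ s₂ s₃ a n (m + 2) = 0 := hF n (m + 2) (by omega)
  have hD : diagResidual q lq s₁ s₂ s₃ a n m = 0 := sub_eq_zero.mpr (hdiag n m hnm)
  have key := qnum_mul_eResidual q lq s₁ s₂ s₃ a n m
  rw [hF₁, hF₂, hD] at key
  simp only [mul_zero, add_zero] at key
  exact (mul_eq_zero.mp key).resolve_left (hnz (n + m) hnm.ge)

/-- Lemma 2.5: if a satisfies the F-equation (2.4.2) above the line n+m = N and
    the diagonal equation (2.4.5) on the line n+m = N, and the relevant
    coefficients [(s₃+k+1)/2]_q are nonzero, then a satisfies the E-equation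
    (2.4.1) on the line n+m = N. -/
theorem stmt16 (q lq s₁ s₂ s₃ : ℂ) (hq0 : q ≠ 0)
    (hroot : ∀ n : ℕ, n ≠ 0 → q ^ n ≠ 1) (hlq : Complex.exp lq = q)
    (N : ℤ) (a : ℤ → ℤ → ℂ)
    (hF : ∀ n m : ℤ, n + m ≥ N + 2 →
      qpow lq ((n : ℂ) - 2) * qnum q lq ((s₁ - (n : ℂ) + 1) / 2) * a (n - 2) m
        + qpow lq ((n : ℂ) + (m : ℂ) - 2) * qnum q lq ((s₂ - (m : ℂ) + 1) / 2) * a n (m - 2)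
        + qnum q lq ((s₃ + (n : ℂ) + (m : ℂ) - 1) / 2) * a n m = 0)
    (hdiag : ∀ n m : ℤ, n + m = N →
      (qnum q lq ((s₃ - (n : ℂ) - (m : ℂ) + 1) / 2) * qnum q lq ((s₃ + (n : ℂ) + (m : ℂ) - 1) / 2)
          - qpow lq (-(m : ℂ)) * qnum q lq ((s₁ + (n : ℂ) - 1) / 2) * qnum q lq ((s₁ - (n : ℂ) + 1) / 2)
          - qpow lq (n : ℂ) * qnum q lq ((s₂ - (m : ℂ) + 1) / 2) * qnum q lq ((s₂ + (m : ℂ) - 1) / 2))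
          * a n m
        = qpow lq ((n : ℂ) - (m : ℂ) - 2) * qnum q lq ((s₁ - (n : ℂ) + 1) / 2)
            * qnum q lq ((s₂ + (m : ℂ) + 1) / 2) * a (n - 2) (m + 2)
          + qnum q lq ((s₂ - (m : ℂ) + 1) / 2) * qnum q lq ((s₁ + (n : ℂ) + 1) / 2)
            * a (n + 2) (m - 2))
    (hnz : ∀ k : ℤ, k ≥ N → qnum q lq ((s₃ + (k : ℂ) + 1) / 2) ≠ 0) :
    ∀ n m : ℤ, n + m = N →
      qnum q lq ((s₁ + (n : ℂ) + 1) / 2) * a (n + 2) m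
        + qpow lq (n : ℂ) * qnum q lq ((s₂ + (m : ℂ) + 1) / 2) * a n (m + 2)
        + qpow lq ((n : ℂ) + (m : ℂ)) * qnum q lq ((s₃ - (n : ℂ) - (m : ℂ) - 1) / 2) * a n m
        = 0 :=
  stmt16_general q lq s₁ s₂ s₃ N a hF hdiag hnz
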